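/- Let M = c • W with c ∈ ℂ, c ≠ 0 and W ∈ Matrix.unitaryGroup (Fin n) ℂ, and let A = U ⋆_M S ⋆_M Vᴴ be a t-SVDM of an m×p×n tensor A. Then ‖A‖_F² = ‖S‖_F² = ∑_{i=1}^{min(m,p)} ∑_{j=1}^{n} |(S j) i i|², i.e. the squared Frobenius norm of A equals the sum of the squared Frobenius norms of the singular tubes S_{i,i,:}. -/

import Mathlib

open scoped BigOperators ComplexConjugate Matrix

noncomputable section

variable {R : Type*}

/-- Mode-3 product of a third-order tensor (encoded by its frontal slices)
with a transform matrix: `(A ×₃ M) i = ∑ j, (M i j) • (A j)`. -/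
def mode3 [RCLike R] {ι α β : Type*} [Fintype ι]
    (A : ι → Matrix α β R) (M : Matrix ι ι R) : ι → Matrix α β R :=
  fun i => ∑ j, M i j • A j

/-- Frobenius (entrywise ℓ²) norm of a matrix. -/
def fnorm [RCLike R] {α β : Type*} [Fintype α] [Fintype β] (A : Matrix α β R) : ℝ :=
  Real.sqrt (∑ a, ∑ b, ‖A a b‖ ^ 2)

/-- Frobenius norm of a tensor: `‖A‖² = ∑ i, ‖A i‖²`. -/
def tnorm [RCLike R] {ι α β : Type*} [Fintype ι] [Fintype α] [Fintype β]
    (A : ι → Matrix α β R) : ℝ :=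
  Real.sqrt (∑ i, fnorm (A i) ^ 2)

/-- The ⋆_M product: facewise product in the transform domain, then inverse transform. -/
def tprodM [RCLike R] {ι m p q : Type*} [Fintype ι] [DecidableEq ι] [Fintype p]
    (M : Matrix ι ι R) (A : ι → Matrix m p R) (B : ι → Matrix p q R) :
    ι → Matrix m q R :=
  mode3 (fun i => mode3 A M i * mode3 B M i) M⁻¹

/-- Conjugate transpose of a tensor under ⋆_M. -/
def tconj [RCLike R] {ι m p : Type*} [Fintype ι] [DecidableEq ι]
    (M : Matrix ι ι R) (A : ι → Matrix m p R) : ι → Matrix p m R :=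
  mode3 (fun i => (mode3 A M i)ᴴ) M⁻¹

/-- The identity tensor under ⋆_M. -/
def tId [RCLike R] (m : Type*) [DecidableEq m] {ι : Type*} [Fintype ι] [DecidableEq ι]
    (M : Matrix ι ι R) : ι → Matrix m m R :=
  mode3 (fun _ => (1 : Matrix m m R)) M⁻¹

/-- A square tensor `Q` is ⋆_M-unitary if `Qᴴ ⋆_M Q = Q ⋆_M Qᴴ = I`. -/
def tUnitary [RCLike R] {ι m : Type*} [Fintype ι] [DecidableEq ι] [Fintype m] [DecidableEq m]
    (M : Matrix ι ι R) (Q : ι → Matrix m m R) : Prop :=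
  tprodM M (tconj M Q) Q = tId m M ∧ tprodM M Q (tconj M Q) = tId m M

/-- A t-SVDM of `A`: a factorization `A = U ⋆_M S ⋆_M Vᴴ` with `U`, `V` ⋆_M-unitary and every
transform-domain slice `Ŝ i` diagonal with real, nonnegative, nonincreasing diagonal entries. -/
def IsTSVDM [RCLike R] {m p n : ℕ} (M : Matrix (Fin n) (Fin n) R)
    (A : Fin n → Matrix (Fin m) (Fin p) R)
    (U : Fin n → Matrix (Fin m) (Fin m) R)
    (S : Fin n → Matrix (Fin m) (Fin p) R)
    (V : Fin n → Matrix (Fin p) (Fin p) R) : Prop :=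
  A = tprodM M (tprodM M U S) (tconj M V) ∧
  tUnitary M U ∧ tUnitary M V ∧
  (∀ (i : Fin n) (a : Fin m) (b : Fin p), (a : ℕ) ≠ (b : ℕ) → mode3 S M i a b = 0) ∧
  (∀ (i : Fin n) (a : Fin m) (b : Fin p), (a : ℕ) = (b : ℕ) →
      ∃ r : ℝ, 0 ≤ r ∧ mode3 S M i a b = (r : R)) ∧
  (∀ (i : Fin n) (a a' : Fin m) (b b' : Fin p), (a : ℕ) = (b : ℕ) → (a' : ℕ) = (b' : ℕ) →
      (a : ℕ) ≤ (a' : ℕ) →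
      RCLike.re (mode3 S M i a' b') ≤ RCLike.re (mode3 S M i a b))

/-- Transform-domain slice of a truncation:
(first k columns of Û) * (leading k×k block of Ŝ) * (first k columns of V̂)ᴴ. -/
def truncSlice [RCLike R] {m p : ℕ} (k : ℕ) (Uh : Matrix (Fin m) (Fin m) R)
    (Sh : Matrix (Fin m) (Fin p) R) (Vh : Matrix (Fin p) (Fin p) R) :
    Matrix (Fin m) (Fin p) R :=
  Matrix.of fun a b =>
    ∑ j : Fin m, ∑ l : Fin p,
      if (j : ℕ) < k ∧ (l : ℕ) < k then Uh a j * Sh j l * star (Vh b l) else 0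

/-- The multi-rank-ρ truncation of a t-SVDM (use `ρ = fun _ => k` for the t-rank-k truncation). -/
def truncTensor [RCLike R] {m p n : ℕ} (M : Matrix (Fin n) (Fin n) R)
    (U : Fin n → Matrix (Fin m) (Fin m) R) (S : Fin n → Matrix (Fin m) (Fin p) R)
    (V : Fin n → Matrix (Fin p) (Fin p) R) (ρ : Fin n → ℕ) :
    Fin n → Matrix (Fin m) (Fin p) R :=
  mode3 (fun i => truncSlice (ρ i) (mode3 U M i) (mode3 S M i) (mode3 V M i)) M⁻¹

/-- The permuted tensor `Aᴾ`: `(Aᴾ c) i j = (A i) c j`. -/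
def tperm [RCLike R] {m p n : ℕ} (A : Fin n → Matrix (Fin m) (Fin p) R) :
    Fin m → Matrix (Fin n) (Fin p) R :=
  fun c => Matrix.of fun i j => A i c j

/-!
Since `Mᴴ M = |c|² I`, the transform `X ↦ X ×₃ M` multiplies `‖X‖_F²` by `|c|²`: it acts on
every mode-3 fibre by `M`. In the transform domain `Â i = Û i * Ŝ i * (V̂ i)ᴴ` with `Û i`, `V̂ i`
unitary, so `Â i` and `Ŝ i` have the same Frobenius norm, whence `‖A‖_F = ‖S‖_F`. Finally
`S = Ŝ ×₃ M⁻¹` is facewise diagonal like `Ŝ`, so only the tubes `S_{i,i,:}` contribute.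
-/

open Matrix

variable {𝕜 : Type*} [RCLike 𝕜]

section Frobenius

variable {α β : Type*} [Fintype α] [Fintype β]

lemma fnorm_sq (X : Matrix α β 𝕜) : fnorm X ^ 2 = ∑ a, ∑ b, ‖X a b‖ ^ 2 :=
  Real.sq_sqrt (by positivity)

lemma ofReal_fnorm_sq (X : Matrix α β 𝕜) : ((fnorm X ^ 2 : ℝ) : 𝕜) = (Xᴴ * X).trace := by
  rw [fnorm_sq, Finset.sum_comm]
  simp [Matrix.trace, Matrix.mul_apply, RCLike.conj_mul]

lemma fnorm_mul_sq_of_conjTranspose_mul_self {γ : Type*} [Fintype γ] [DecidableEq α]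
    {N : Matrix γ α 𝕜} {r : ℝ} (hN : Nᴴ * N = (r : 𝕜) • 1) (X : Matrix α β 𝕜) :
    fnorm (N * X) ^ 2 = r * fnorm X ^ 2 := by
  apply RCLike.ofReal_injective (K := 𝕜)
  rw [RCLike.ofReal_mul, ofReal_fnorm_sq, ofReal_fnorm_sq, conjTranspose_mul,
    Matrix.mul_assoc, ← Matrix.mul_assoc Nᴴ, hN, Matrix.smul_mul, Matrix.one_mul,
    Matrix.mul_smul, trace_smul, smul_eq_mul]

lemma fnorm_mul_mul_conjTranspose_sq [DecidableEq α] [DecidableEq β]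
    {Q : Matrix α α 𝕜} {P : Matrix β β 𝕜} (hQ : Qᴴ * Q = 1) (hP : Pᴴ * P = 1) (X : Matrix α β 𝕜) :
    fnorm (Q * X * Pᴴ) ^ 2 = fnorm X ^ 2 := by
  apply RCLike.ofReal_injective (K := 𝕜)
  simp only [ofReal_fnorm_sq, conjTranspose_mul, conjTranspose_conjTranspose, Matrix.mul_assoc]
  rw [← Matrix.mul_assoc Qᴴ, hQ, Matrix.one_mul, trace_mul_comm, Matrix.mul_assoc,
    Matrix.mul_assoc, hP, Matrix.mul_one]

end Frobenius

section Transform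

variable {ι α β : Type*} [Fintype ι]

lemma mode3_apply (A : ι → Matrix α β 𝕜) (M : Matrix ι ι 𝕜) (i : ι) (a : α) (b : β) :
    mode3 A M i a b = ∑ j, M i j * A j a b := by
  simp [mode3, Matrix.sum_apply]

lemma mode3_mode3 (A : ι → Matrix α β 𝕜) (M N : Matrix ι ι 𝕜) :
    mode3 (mode3 A N) M = mode3 A (M * N) := by
  funext i
  ext a b
  simp only [mode3_apply, Matrix.mul_apply, Finset.mul_sum, Finset.sum_mul, mul_assoc]
  exact Finset.sum_comm

lemma mode3_one [DecidableEq ι] (A : ι → Matrix α β 𝕜) : mode3 A 1 = A := by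
  funext i
  simp [mode3, Matrix.one_apply, ite_smul]

variable [DecidableEq ι] {M : Matrix ι ι 𝕜}

lemma mode3_mode3_inv (hM : IsUnit M.det) (A : ι → Matrix α β 𝕜) :
    mode3 (mode3 A M⁻¹) M = A := by
  rw [mode3_mode3, mul_nonsing_inv M hM, mode3_one]

lemma mode3_inv_mode3 (hM : IsUnit M.det) (A : ι → Matrix α β 𝕜) :
    mode3 (mode3 A M) M⁻¹ = A := by
  rw [mode3_mode3, nonsing_inv_mul M hM, mode3_one]

lemma tUnitary.conjTranspose_mul_self [Fintype α] [DecidableEq α] {Q : ι → Matrix α α 𝕜}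
    (hM : IsUnit M.det) (hQ : tUnitary M Q) (i : ι) :
    (mode3 Q M i)ᴴ * mode3 Q M i = 1 := by
  have := congrFun (congrArg (mode3 · M) hQ.1) i
  simpa only [tprodM, tconj, tId, mode3_mode3_inv hM] using this

end Transform

lemma isUnit_det_of_conjTranspose_mul_self {ι : Type*} [Fintype ι] [DecidableEq ι]
    {M : Matrix ι ι 𝕜} {r : ℝ} (hM : Mᴴ * M = (r : 𝕜) • 1) (hr : r ≠ 0) : IsUnit M.det :=
  isUnit_det_of_left_inverse (B := (r⁻¹ : 𝕜) • Mᴴ) <| by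
    rw [Matrix.smul_mul, hM, smul_smul, inv_mul_cancel₀ (RCLike.ofReal_ne_zero.2 hr), one_smul]

lemma smul_conjTranspose_mul_smul {ι : Type*} [Fintype ι] [DecidableEq ι]
    {W : Matrix ι ι 𝕜} (hW : W ∈ unitaryGroup ι 𝕜) (c : 𝕜) :
    (c • W)ᴴ * (c • W) = ((‖c‖ ^ 2 : ℝ) : 𝕜) • 1 := by
  rw [conjTranspose_smul, Matrix.smul_mul, Matrix.mul_smul, smul_smul, ← star_eq_conjTranspose,
    mem_unitaryGroup_iff'.1 hW, RCLike.star_def, RCLike.conj_mul, RCLike.ofReal_pow]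

lemma Fin.sum_sum_eq_sum_diag {γ : Type*} [AddCommMonoid γ] {m p : ℕ} (f : Fin m → Fin p → γ)
    (hf : ∀ (a : Fin m) (b : Fin p), (a : ℕ) ≠ b → f a b = 0) :
    ∑ a, ∑ b, f a b = ∑ i : Fin (min m p),
      f (Fin.castLE (min_le_left m p) i) (Fin.castLE (min_le_right m p) i) := by
  rw [← Fintype.sum_prod_type']
  symm
  refine Finset.sum_of_injOn (fun i => (Fin.castLE (min_le_left m p) i,
    Fin.castLE (min_le_right m p) i)) ?_ (by simp) ?_ (by simp)
  · intro i _ j _ hij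
    simpa [Fin.ext_iff] using congrArg (fun x => (x.1 : ℕ)) hij
  · rintro ⟨a, b⟩ - hab
    refine hf a b fun h => hab ⟨⟨a, lt_min a.isLt (h ▸ b.isLt)⟩, by simp, ?_⟩
    simp [Prod.ext_iff, Fin.ext_iff, h]

section TensorNorm

variable {n m p : ℕ}

lemma tnorm_sq {ι α β : Type*} [Fintype ι] [Fintype α] [Fintype β] (A : ι → Matrix α β 𝕜) :
    tnorm A ^ 2 = ∑ i, fnorm (A i) ^ 2 :=
  Real.sq_sqrt (by positivity)

lemma tnorm_sq_eq_sum_fnorm_tperm_sq (A : Fin n → Matrix (Fin m) (Fin p) 𝕜) :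
    tnorm A ^ 2 = ∑ a, fnorm (tperm A a) ^ 2 := by
  simp only [tnorm_sq, fnorm_sq, tperm, of_apply]
  rw [Finset.sum_comm]

lemma tperm_mode3 (A : Fin n → Matrix (Fin m) (Fin p) 𝕜) (N : Matrix (Fin n) (Fin n) 𝕜)
    (a : Fin m) : tperm (mode3 A N) a = N * tperm A a := by
  ext i b
  simp [tperm, mode3_apply, Matrix.mul_apply]

lemma tnorm_mode3_sq {N : Matrix (Fin n) (Fin n) 𝕜} {r : ℝ} (hN : Nᴴ * N = (r : 𝕜) • 1)
    (A : Fin n → Matrix (Fin m) (Fin p) 𝕜) :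
    tnorm (mode3 A N) ^ 2 = r * tnorm A ^ 2 := by
  simp only [tnorm_sq_eq_sum_fnorm_tperm_sq, tperm_mode3,
    fnorm_mul_sq_of_conjTranspose_mul_self hN, Finset.mul_sum]

lemma tnorm_sq_eq_sum_diag {S : Fin n → Matrix (Fin m) (Fin p) 𝕜}
    (hS : ∀ (j : Fin n) (a : Fin m) (b : Fin p), (a : ℕ) ≠ b → S j a b = 0) :
    tnorm S ^ 2 = ∑ i : Fin (min m p), ∑ j : Fin n,
      ‖S j (Fin.castLE (min_le_left m p) i) (Fin.castLE (min_le_right m p) i)‖ ^ 2 := by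
  simp only [tnorm_sq, fnorm_sq]
  rw [Finset.sum_comm (s := (Finset.univ : Finset (Fin (min m p))))]
  refine Finset.sum_congr rfl fun j _ => Fin.sum_sum_eq_sum_diag _ fun a b hab => ?_
  simp [hS j a b hab]

end TensorNorm

namespace IsTSVDM

variable {n m p : ℕ} {M : Matrix (Fin n) (Fin n) 𝕜} {A : Fin n → Matrix (Fin m) (Fin p) 𝕜}
  {U : Fin n → Matrix (Fin m) (Fin m) 𝕜} {S : Fin n → Matrix (Fin m) (Fin p) 𝕜}
  {V : Fin n → Matrix (Fin p) (Fin p) 𝕜}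

lemma mode3_eq (hM : IsUnit M.det) (h : IsTSVDM M A U S V) (i : Fin n) :
    mode3 A M i = mode3 U M i * mode3 S M i * (mode3 V M i)ᴴ := by
  have := congrFun (congrArg (mode3 · M) h.1) i
  simpa only [tprodM, tconj, mode3_mode3_inv hM] using this

lemma tnorm_mode3_sq_eq (hM : IsUnit M.det) (h : IsTSVDM M A U S V) :
    tnorm (mode3 A M) ^ 2 = tnorm (mode3 S M) ^ 2 := by
  simp only [tnorm_sq, h.mode3_eq hM, fnorm_mul_mul_conjTranspose_sq
    (h.2.1.conjTranspose_mul_self hM _) (h.2.2.1.conjTranspose_mul_self hM _)]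

lemma apply_eq_zero_of_ne (hM : IsUnit M.det) (h : IsTSVDM M A U S V) (j : Fin n) (a : Fin m)
    (b : Fin p) (hab : (a : ℕ) ≠ b) : S j a b = 0 := by
  rw [← mode3_inv_mode3 hM S, mode3_apply]
  exact Finset.sum_eq_zero fun i _ => by rw [h.2.2.2.1 i a b hab, mul_zero]

lemma tnorm_sq_eq {r : ℝ} (hM : Mᴴ * M = (r : 𝕜) • 1) (hr : r ≠ 0) (h : IsTSVDM M A U S V) :
    tnorm A ^ 2 = tnorm S ^ 2 := by
  refine mul_left_cancel₀ hr ?_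
  rw [← tnorm_mode3_sq hM, ← tnorm_mode3_sq hM,
    h.tnorm_mode3_sq_eq (isUnit_det_of_conjTranspose_mul_self hM hr)]

end IsTSVDM

/-- for a t-SVDM `A = U ⋆_M S ⋆_M Vᴴ` with `M = c • W`, `c ≠ 0`, `W` unitary,
`‖A‖² = ‖S‖² = ∑_{i<min(m,p)} ∑_j |(S j) i i|²`. -/
theorem stmt3 {n m p : ℕ}
    (W : Matrix (Fin n) (Fin n) ℂ) (hW : W ∈ Matrix.unitaryGroup (Fin n) ℂ)
    (c : ℂ) (hc : c ≠ 0)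
    (A : Fin n → Matrix (Fin m) (Fin p) ℂ)
    (U : Fin n → Matrix (Fin m) (Fin m) ℂ)
    (S : Fin n → Matrix (Fin m) (Fin p) ℂ)
    (V : Fin n → Matrix (Fin p) (Fin p) ℂ)
    (h : IsTSVDM (c • W) A U S V) :
    tnorm A ^ 2 = tnorm S ^ 2 ∧
    tnorm A ^ 2 = ∑ i : Fin (min m p), ∑ j : Fin n,
      ‖S j (Fin.castLE (min_le_left m p) i) (Fin.castLE (min_le_right m p) i)‖ ^ 2 := by
  have hM := smul_conjTranspose_mul_smul hW c
  have hc2 : ‖c‖ ^ 2 ≠ 0 := by positivity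
  have hAS := h.tnorm_sq_eq hM hc2
  exact ⟨hAS, hAS.trans <| tnorm_sq_eq_sum_diag <|
    h.apply_eq_zero_of_ne (isUnit_det_of_conjTranspose_mul_self hM hc2)⟩
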